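/- For all positive integers n, every target t ∈ ℝ, and all 1-dense sets X_1, …, X_{n-1} ⊆ ℝ, there exist real numbers p_0, p_1, …, p_n and a real number s such that p_0 = 0, p_n = t, p_i ∈ X_i for all 1 ≤ i ≤ n−1, and |(p_{i+1} − p_i) − s| ≤ 1 for all 0 ≤ i ≤ n−1. (In particular, the one-dimensional discrepancy constant satisfies D_1' ≤ 2.) -/

import Mathlib

/-- A set `X ⊆ ℝ` is 1-dense if every real is at distance `< 1` from `X`. -/
def IsOneDense (X : Set ℝ) : Prop := ∀ y : ℝ, ∃ x ∈ X, |y - x| < 1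

/-!
Fix the drift `s` and let `R(s)` be the set of points `p_{n-1}` reachable from `p_0 = 0` with
`p_j ∈ X_j` and every step within distance `< 1` of `s`. By density `R(s)` is nonempty, and by
induction its open `1`-neighbourhood is an interval. Since the step bounds are strict, membership
in `R(s)` is open in `s`, so the sets of `s` for which some `a ∈ R(s)` has `a + s < t + 1`,
resp. `a + s > t - 1`, are open; they cover `ℝ` and are nonempty because `R(s)` stays within
`(n-1)` of `(n-1)s`. Connectedness of `ℝ` yields an `s` in both, and then `t - s` lies in the
`1`-neighbourhood of `R(s)`, which closes the chain with the final step to `t`.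
-/

open Filter Topology

def stepReachable (X : ℕ → Set ℝ) (s : ℝ) : ℕ → Set ℝ
  | 0 => {0}
  | i + 1 => {y | y ∈ X (i + 1) ∧ ∃ w ∈ stepReachable X s i, |y - w - s| < 1}

section

variable {X : ℕ → Set ℝ} {s : ℝ} {i : ℕ}

theorem stepReachable_nonempty (hX : ∀ j, 1 ≤ j → j ≤ i → IsOneDense (X j)) :
    (stepReachable X s i).Nonempty := by
  induction i with
  | zero => exact ⟨0, rfl⟩
  | succ i ih =>
    obtain ⟨w, hw⟩ := ih fun j h1 h2 => hX j h1 (by omega)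
    obtain ⟨y, hy, hyw⟩ := hX (i + 1) le_add_self le_rfl (w + s)
    exact ⟨y, hy, w, hw, by rwa [abs_sub_comm, sub_add_eq_sub_sub] at hyw⟩

theorem abs_sub_mul_le_of_mem_stepReachable {x : ℝ} (hx : x ∈ stepReachable X s i) :
    |x - i * s| ≤ i := by
  induction i generalizing x with
  | zero => simp [show x = 0 from hx]
  | succ i ih =>
    obtain ⟨-, w, hw, hxw⟩ := hx
    have hw' := abs_le.mp (ih hw)
    have hxw' := abs_lt.mp hxw
    push_cast
    exact abs_le.mpr ⟨by linarith, by linarith⟩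

/-- The open `1`-neighbourhood of a reachable set is an interval. -/
theorem exists_abs_sub_lt_of_mem_stepReachable (hX : ∀ j, 1 ≤ j → j ≤ i → IsOneDense (X j))
    {z : ℝ} (ha : ∃ a ∈ stepReachable X s i, a - 1 < z)
    (hb : ∃ b ∈ stepReachable X s i, z < b + 1) :
    ∃ x ∈ stepReachable X s i, |z - x| < 1 := by
  induction i generalizing z with
  | zero =>
    obtain ⟨a, rfl : a = 0, ha⟩ := ha
    obtain ⟨b, rfl : b = 0, hb⟩ := hb
    exact ⟨0, rfl, abs_lt.mpr ⟨by linarith, by linarith⟩⟩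
  | succ i ih =>
    obtain ⟨a', ha', hza'⟩ := ha
    obtain ⟨b', hb', hzb'⟩ := hb
    by_cases hnear : |z - a'| < 1 ∨ |z - b'| < 1
    · exact hnear.elim (⟨a', ha', ·⟩) (⟨b', hb', ·⟩)
    obtain ⟨ha'z, hzb'⟩ : a' + 1 ≤ z ∧ z ≤ b' - 1 := by
      rw [not_or, not_lt, not_lt, le_abs, le_abs] at hnear
      obtain ⟨h1 | h1, h2 | h2⟩ := hnear <;> constructor <;> linarith
    obtain ⟨-, a, ha, ha'a⟩ := ha'
    obtain ⟨-, b, hb, hb'b⟩ := hb'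
    obtain ⟨y, hy, hzy⟩ := hX (i + 1) le_add_self le_rfl z
    have := abs_lt.mp ha'a
    have := abs_lt.mp hb'b
    have := abs_lt.mp hzy
    obtain ⟨w, hw, hyw⟩ := ih (fun j h1 h2 => hX j h1 (by omega)) (z := y - s)
      ⟨a, ha, by linarith⟩ ⟨b, hb, by linarith⟩
    exact ⟨y, ⟨hy, w, hw, by rwa [sub_right_comm]⟩, hzy⟩

theorem eventually_mem_stepReachable {x : ℝ} (hx : x ∈ stepReachable X s i) :
    ∀ᶠ s' in 𝓝 s, x ∈ stepReachable X s' i := by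
  induction i generalizing x with
  | zero => exact .of_forall fun _ => hx
  | succ i ih =>
    obtain ⟨hxX, w, hw, hxw⟩ := hx
    have hcont : Continuous fun s' : ℝ => |x - w - s'| := by fun_prop
    filter_upwards [ih hw, hcont.continuousAt.eventually_lt continuousAt_const hxw]
      with s' hw' hxw' using ⟨hxX, w, hw', hxw'⟩

theorem isOpen_setOf_exists_mem_stepReachable {U : Set ℝ} (hU : IsOpen U) :
    IsOpen {s | ∃ a ∈ stepReachable X s i, a + s ∈ U} := by
  refine isOpen_iff_mem_nhds.mpr fun s ⟨a, ha, haU⟩ => ?_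
  have hcont : Continuous fun s' : ℝ => a + s' := by fun_prop
  filter_upwards [eventually_mem_stepReachable ha, hcont.continuousAt.preimage_mem_nhds
    (hU.mem_nhds haU)] with s' ha' haU' using ⟨a, ha', haU'⟩

theorem exists_chain_of_mem_stepReachable {x : ℝ} (hx : x ∈ stepReachable X s i) :
    ∃ p : ℕ → ℝ, p 0 = 0 ∧ p i = x ∧ (∀ j, 1 ≤ j → j ≤ i → p j ∈ X j) ∧
      ∀ j < i, |p (j + 1) - p j - s| < 1 := by
  induction i generalizing x with
  | zero => exact ⟨fun _ => 0, rfl, hx.symm, fun j h1 h2 => by omega, fun j hj => by omega⟩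
  | succ i ih =>
    obtain ⟨hxX, w, hw, hxw⟩ := hx
    obtain ⟨p, hp0, hpw, hpX, hps⟩ := ih hw
    refine ⟨Function.update p (i + 1) x, by simp [hp0], by simp, fun j h1 h2 => ?_,
      fun j hj => ?_⟩
    · rcases h2.lt_or_eq with h2 | rfl
      · rw [Function.update_of_ne (by omega)]
        exact hpX j h1 (by omega)
      · simpa using hxX
    · rcases (Nat.lt_succ_iff.mp hj).lt_or_eq with hj | rfl
      · rw [Function.update_of_ne (by omega), Function.update_of_ne (by omega)]
        exact hps j hj
      · simpa [hpw] using hxw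

theorem exists_mem_stepReachable_add_lt (hX : ∀ j, 1 ≤ j → j ≤ i → IsOneDense (X j)) (c : ℝ) :
    ∃ s, ∃ a ∈ stepReachable X s i, a + s < c := by
  obtain ⟨a, ha⟩ := stepReachable_nonempty (s := -|c| - 1) hX
  have := abs_le.mp (abs_sub_mul_le_of_mem_stepReachable ha)
  exact ⟨-|c| - 1, a, ha, by nlinarith [neg_abs_le c, abs_nonneg c, i.cast_nonneg (α := ℝ)]⟩

theorem exists_mem_stepReachable_lt_add (hX : ∀ j, 1 ≤ j → j ≤ i → IsOneDense (X j)) (c : ℝ) :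
    ∃ s, ∃ a ∈ stepReachable X s i, c < a + s := by
  obtain ⟨a, ha⟩ := stepReachable_nonempty (s := |c| + 1) hX
  have := abs_le.mp (abs_sub_mul_le_of_mem_stepReachable ha)
  exact ⟨|c| + 1, a, ha, by nlinarith [le_abs_self c, abs_nonneg c, i.cast_nonneg (α := ℝ)]⟩

theorem exists_mem_stepReachable_abs_sub_lt (hX : ∀ j, 1 ≤ j → j ≤ i → IsOneDense (X j))
    (t : ℝ) : ∃ s, ∃ x ∈ stepReachable X s i, |t - s - x| < 1 := by
  have hcover : Set.univ ⊆ {s | ∃ a ∈ stepReachable X s i, a + s ∈ Set.Iio (t + 1)} ∪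
      {s | ∃ b ∈ stepReachable X s i, b + s ∈ Set.Ioi (t - 1)} := fun s _ => by
    obtain ⟨x, hx⟩ := stepReachable_nonempty (s := s) hX
    rcases lt_or_ge (x + s) (t + 1) with h | h
    exacts [.inl ⟨x, hx, h⟩, .inr ⟨x, hx, show t - 1 < x + s by linarith⟩]
  obtain ⟨s, -, ⟨a, ha, hat⟩, ⟨b, hb, hbt⟩⟩ := isPreconnected_univ _ _
    (isOpen_setOf_exists_mem_stepReachable isOpen_Iio)
    (isOpen_setOf_exists_mem_stepReachable isOpen_Ioi) hcover
    (let ⟨s, a, ha, h⟩ := exists_mem_stepReachable_add_lt hX (t + 1); ⟨s, trivial, a, ha, h⟩)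
    (let ⟨s, b, hb, h⟩ := exists_mem_stepReachable_lt_add hX (t - 1); ⟨s, trivial, b, hb, h⟩)
  rw [Set.mem_Iio] at hat
  rw [Set.mem_Ioi] at hbt
  exact ⟨s, exists_abs_sub_lt_of_mem_stepReachable hX ⟨a, ha, by linarith⟩ ⟨b, hb, by linarith⟩⟩

end

theorem stmt10 (n : ℕ) (hn : 0 < n) (t : ℝ)
    (X : ℕ → Set ℝ) (hX : ∀ i, 1 ≤ i → i ≤ n - 1 → IsOneDense (X i)) :
    ∃ (p : ℕ → ℝ) (s : ℝ),
      p 0 = 0 ∧ p n = t ∧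
      (∀ i, 1 ≤ i → i ≤ n - 1 → p i ∈ X i) ∧
      (∀ i, i ≤ n - 1 → |(p (i + 1) - p i) - s| ≤ 1) := by
  obtain ⟨s, x, hx, hxt⟩ := exists_mem_stepReachable_abs_sub_lt hX t
  obtain ⟨p, hp0, hpx, hpX, hps⟩ := exists_chain_of_mem_stepReachable hx
  refine ⟨Function.update p n t, s, by simp [hn.ne, hp0], by simp, fun i h1 h2 => ?_,
    fun i hi => ?_⟩
  · rw [Function.update_of_ne (by omega)]
    exact hpX i h1 h2
  rcases hi.lt_or_eq with hi | rfl
  · rw [Function.update_of_ne (by omega), Function.update_of_ne (by omega)]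
    exact (hps i hi).le
  · rw [Nat.sub_add_cancel hn, Function.update_self, Function.update_of_ne (by omega), hpx,
      sub_right_comm]
    exact hxt.le
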